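/- arXiv:0901.1504 — 6 statements merged into one kernel-verified Lean document; each statement's English description precedes it below -/
import Mathlib

section
/- Let n ≥ 1, let A be a real symmetric n×n matrix, let τ ∈ ℝ be such that A + τIₙ is positive semidefinite, let ε > 0 and ρ ≥ 0. Define f(x) = τ‖x‖₂² + ρ·Σᵢ log(ε + |xᵢ|) − xᵀ(A + τIₙ)x and g(x, y) = τ‖x‖₂² − 2xᵀ(A + τIₙ)y + yᵀ(A + τIₙ)y + ρ·Σᵢ log(ε + |yᵢ|) + ρ·Σᵢ (|xᵢ| − |yᵢ|)/(|yᵢ| + ε). Then g majorizes f on ℝⁿ, i.e., f(x) ≤ g(x, y) for all x, y ∈ ℝⁿ, and g(x, x) = f(x) for all x ∈ ℝⁿ. -/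
open Matrix

lemma aux_sym {n : ℕ} (A : Matrix (Fin n) (Fin n) ℝ) (hA : A.IsSymm)
    (τ : ℝ) (x y : Fin n → ℝ) :
    x ⬝ᵥ (A + τ • (1 : Matrix (Fin n) (Fin n) ℝ)) *ᵥ y
      = y ⬝ᵥ (A + τ • (1 : Matrix (Fin n) (Fin n) ℝ)) *ᵥ x := by
  have hM : (A + τ • (1 : Matrix (Fin n) (Fin n) ℝ)).IsSymm := by
    unfold Matrix.IsSymm at *
    simp [Matrix.transpose_add, hA]
  rw [Matrix.dotProduct_mulVec]
  conv_lhs => rw [← hM]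
  rw [Matrix.vecMul_transpose, dotProduct_comm]

/-- The function `g` majorizes `f = τ‖x‖₂² + ρ Σ log(ε+|xᵢ|) − xᵀ(A+τI)x` on ℝⁿ. -/
theorem stmt_0 (n : ℕ) (hn : 1 ≤ n) (A : Matrix (Fin n) (Fin n) ℝ) (hA : A.IsSymm)
    (τ ε ρ : ℝ)
    (hpsd : ∀ x : Fin n → ℝ, 0 ≤ x ⬝ᵥ (A + τ • (1 : Matrix (Fin n) (Fin n) ℝ)) *ᵥ x)
    (hε : 0 < ε) (hρ : 0 ≤ ρ) :
    (∀ x y : Fin n → ℝ,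
      τ * (∑ i, (x i) ^ 2) + ρ * (∑ i, Real.log (ε + |x i|))
          - x ⬝ᵥ (A + τ • (1 : Matrix (Fin n) (Fin n) ℝ)) *ᵥ x
        ≤ τ * (∑ i, (x i) ^ 2)
          - 2 * (x ⬝ᵥ (A + τ • (1 : Matrix (Fin n) (Fin n) ℝ)) *ᵥ y)
          + y ⬝ᵥ (A + τ • (1 : Matrix (Fin n) (Fin n) ℝ)) *ᵥ y
          + ρ * (∑ i, Real.log (ε + |y i|))
          + ρ * (∑ i, (|x i| - |y i|) / (|y i| + ε))) ∧
    (∀ x : Fin n → ℝ,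
      τ * (∑ i, (x i) ^ 2)
          - 2 * (x ⬝ᵥ (A + τ • (1 : Matrix (Fin n) (Fin n) ℝ)) *ᵥ x)
          + x ⬝ᵥ (A + τ • (1 : Matrix (Fin n) (Fin n) ℝ)) *ᵥ x
          + ρ * (∑ i, Real.log (ε + |x i|))
          + ρ * (∑ i, (|x i| - |x i|) / (|x i| + ε))
        = τ * (∑ i, (x i) ^ 2) + ρ * (∑ i, Real.log (ε + |x i|))
          - x ⬝ᵥ (A + τ • (1 : Matrix (Fin n) (Fin n) ℝ)) *ᵥ x) := by
  set M := A + τ • (1 : Matrix (Fin n) (Fin n) ℝ) with hMdef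
  constructor
  · intro x y
    -- quadratic part
    have hquad : 0 ≤ x ⬝ᵥ M *ᵥ x - 2 * (x ⬝ᵥ M *ᵥ y) + y ⬝ᵥ M *ᵥ y := by
      have h := hpsd (x - y)
      have hexp : (x - y) ⬝ᵥ M *ᵥ (x - y)
          = x ⬝ᵥ M *ᵥ x - x ⬝ᵥ M *ᵥ y - y ⬝ᵥ M *ᵥ x + y ⬝ᵥ M *ᵥ y := by
        rw [Matrix.mulVec_sub, sub_dotProduct, dotProduct_sub,
          dotProduct_sub]
        ring
      have hsym := aux_sym A hA τ x y
      rw [hexp] at h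
      rw [← hMdef] at hsym
      linarith [h, hsym]
    -- log part
    have hlog : ∀ i : Fin n, Real.log (ε + |x i|)
        ≤ Real.log (ε + |y i|) + (|x i| - |y i|) / (|y i| + ε) := by
      intro i
      have ha : 0 < ε + |x i| := by positivity
      have hb : 0 < ε + |y i| := by positivity
      have h := Real.log_le_sub_one_of_pos (show 0 < (ε + |x i|) / (ε + |y i|) by positivity)
      rw [Real.log_div ha.ne' hb.ne'] at h
      have heq : (ε + |x i|) / (ε + |y i|) - 1 = (|x i| - |y i|) / (|y i| + ε) := by
        rw [div_sub_one hb.ne']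
        congr 1 <;> ring
      linarith [heq ▸ h]
    have hsum : (∑ i, Real.log (ε + |x i|))
        ≤ (∑ i, Real.log (ε + |y i|)) + ∑ i, (|x i| - |y i|) / (|y i| + ε) := by
      rw [← Finset.sum_add_distrib]
      exact Finset.sum_le_sum fun i _ => hlog i
    have := mul_le_mul_of_nonneg_left hsum hρ
    rw [mul_add] at this
    linarith
  · intro x
    have : (∑ i, (|x i| - |x i|) / (|x i| + ε)) = 0 := by simp
    rw [this, mul_zero]
    ring
end

section
/- For every x ∈ ℝⁿ, the limit as ε → 0⁺ of Σᵢ₌₁ⁿ log(1 + |xᵢ|/ε) / log(1 + 1/ε) exists and equals ‖x‖₀, the number of nonzero entries of x. -/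
/-!
For `a > 0`, `log (1 + a/ε) - log (1 + 1/ε) = log ((ε + a)/(ε + 1)) → log a` stays bounded while
`log (1 + 1/ε) → ∞`, so each nonzero coordinate contributes a ratio tending to `1`; a zero
coordinate contributes `log 1 = 0` identically.
-/

open Filter Topology

theorem Filter.Tendsto.div_tendsto_one_of_sub {α 𝕜 : Type*} [Field 𝕜] [LinearOrder 𝕜]
    [IsStrictOrderedRing 𝕜] [TopologicalSpace 𝕜] [OrderTopology 𝕜] {l : Filter α} {f g : α → 𝕜}
    {c : 𝕜} (hfg : Tendsto (fun x => f x - g x) l (𝓝 c)) (hg : Tendsto g l atTop) :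
    Tendsto (fun x => f x / g x) l (𝓝 1) := by
  have hquot : Tendsto (fun x => 1 + (f x - g x) / g x) l (𝓝 (1 + 0)) :=
    tendsto_const_nhds.add (hfg.div_atTop hg)
  rw [add_zero] at hquot
  refine hquot.congr' ?_
  filter_upwards [hg.eventually_ne_atTop 0] with x hx
  field_simp
  ring

theorem tendsto_log_one_add_inv_nhdsGT_zero :
    Tendsto (fun ε : ℝ => Real.log (1 + 1 / ε)) (𝓝[>] 0) atTop := by
  simpa only [one_div, Function.comp_def] using
    Real.tendsto_log_atTop.comp (tendsto_atTop_add_const_left _ 1 tendsto_inv_nhdsGT_zero)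

theorem tendsto_log_one_add_div_div_log_one_add_inv {a : ℝ} (ha : 0 < a) :
    Tendsto (fun ε : ℝ => Real.log (1 + a / ε) / Real.log (1 + 1 / ε)) (𝓝[>] 0) (𝓝 1) := by
  refine Tendsto.div_tendsto_one_of_sub (c := Real.log a) ?_ tendsto_log_one_add_inv_nhdsGT_zero
  have hcont : ContinuousAt (fun ε : ℝ => Real.log ((ε + a) / (ε + 1))) 0 :=
    ((continuousAt_id.add continuousAt_const).div (continuousAt_id.add continuousAt_const)
      (by norm_num)).log (by simp [ha.ne'])
  have hlim := hcont.tendsto.mono_left (nhdsWithin_le_nhds (s := Set.Ioi 0))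
  simp only [zero_add, div_one] at hlim
  refine hlim.congr' ?_
  filter_upwards [self_mem_nhdsWithin] with ε (hε : 0 < ε)
  rw [← Real.log_div (by positivity) (by positivity)]
  congr 1
  field_simp

/-- As ε → 0⁺, Σᵢ log(1 + |xᵢ|/ε)/log(1 + 1/ε) tends to ‖x‖₀, the number of nonzero entries. -/
theorem stmt_4 (n : ℕ) (x : Fin n → ℝ) :
    Filter.Tendsto
      (fun ε : ℝ => ∑ i, Real.log (1 + |x i| / ε) / Real.log (1 + 1 / ε))
      (nhdsWithin 0 (Set.Ioi 0))
      (nhds ((Finset.univ.filter (fun i => x i ≠ 0)).card : ℝ)) := by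
  rw [Finset.natCast_card_filter]
  refine tendsto_finsetSum _ fun i _ => ?_
  by_cases hx : x i = 0
  · simp [hx]
  · simpa [hx] using tendsto_log_one_add_div_div_log_one_add_inv (abs_pos.mpr hx)
end

section
/- For a > 0 and ε > 0 define a_ε := log(1 + a/ε) / log(1 + 1/ε). Then: (i) if a > 1, the map ε ↦ a_ε is strictly increasing on (0, ∞), i.e., for 0 < ε₂ < ε₁ one has a_{ε₂} < a_{ε₁}; (ii) if 0 < a < 1, the map ε ↦ a_ε is strictly decreasing on (0, ∞), i.e., for 0 < ε₂ < ε₁ one has a_{ε₂} > a_{ε₁}. -/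
/-!
Substitute u = log(1 + 1/ε), which decreases from ∞ to 0 as ε runs over (0, ∞). Then
a_ε = φ(u)/u with φ(u) = log(1 + a(eᵘ - 1)), and φ(0) = 0, so a_ε is the slope of the chord of φ
from 0 to u. Since φ'' = a(1 - a)eᵘ/(1 + a(eᵘ - 1))², φ is strictly concave on [0, ∞) when a > 1
and strictly convex when a < 1; the chord slope is accordingly strictly decreasing or increasing
in u, hence strictly increasing or decreasing in ε.
-/

open Real Set

theorem StrictConvexOn.strictMonoOn_div_self {𝕜 : Type*} [Field 𝕜] [LinearOrder 𝕜]
    [IsStrictOrderedRing 𝕜] {f : 𝕜 → 𝕜} (hf : StrictConvexOn 𝕜 (Ici 0) f) (hf0 : f 0 = 0) :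
    StrictMonoOn (fun x => f x / x) (Ioi 0) := fun x hx y hy hxy => by
  simpa [hf0] using hf.secant_strict_mono self_mem_Ici (mem_Ici_of_Ioi hx) (mem_Ici_of_Ioi hy)
    (ne_of_gt hx) (ne_of_gt hy) hxy

theorem StrictConcaveOn.strictAntiOn_div_self {𝕜 : Type*} [Field 𝕜] [LinearOrder 𝕜]
    [IsStrictOrderedRing 𝕜] {f : 𝕜 → 𝕜} (hf : StrictConcaveOn 𝕜 (Ici 0) f) (hf0 : f 0 = 0) :
    StrictAntiOn (fun x => f x / x) (Ioi 0) := fun x hx y hy hxy => by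
  simpa [hf0] using hf.secant_strict_mono self_mem_Ici (mem_Ici_of_Ioi hx) (mem_Ici_of_Ioi hy)
    (ne_of_gt hx) (ne_of_gt hy) hxy

noncomputable def logOneAddMulExpSubOne (a u : ℝ) : ℝ := log (1 + a * (exp u - 1))

namespace logOneAddMulExpSubOne

variable {a : ℝ}

@[simp] lemma apply_zero : logOneAddMulExpSubOne a 0 = 0 := by
  simp [logOneAddMulExpSubOne]

lemma apply_log_one_add {t : ℝ} (ht : 0 < 1 + t) :
    logOneAddMulExpSubOne a (log (1 + t)) = log (1 + a * t) := by
  rw [logOneAddMulExpSubOne, exp_log ht, add_sub_cancel_left]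

lemma one_add_mul_exp_sub_one_pos (ha : 0 ≤ a) {u : ℝ} (hu : 0 ≤ u) :
    0 < 1 + a * (exp u - 1) := by
  have := one_le_exp hu
  nlinarith

lemma hasDerivAt_one_add_mul_exp_sub_one (u : ℝ) :
    HasDerivAt (fun v => 1 + a * (exp v - 1)) (a * exp u) u := by
  simpa using ((hasDerivAt_exp u).sub_const 1).const_mul a |>.const_add 1

lemma hasDerivAt (ha : 0 ≤ a) {u : ℝ} (hu : 0 ≤ u) :
    HasDerivAt (logOneAddMulExpSubOne a) (a * exp u / (1 + a * (exp u - 1))) u :=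
  (hasDerivAt_one_add_mul_exp_sub_one u).log (one_add_mul_exp_sub_one_pos ha hu).ne'

lemma iterate_deriv_two (ha : 0 ≤ a) {u : ℝ} (hu : 0 < u) :
    deriv^[2] (logOneAddMulExpSubOne a) u = a * (1 - a) * exp u / (1 + a * (exp u - 1)) ^ 2 := by
  have hderiv : deriv (logOneAddMulExpSubOne a) =ᶠ[nhds u]
      fun v => a * exp v / (1 + a * (exp v - 1)) := by
    filter_upwards [Ioi_mem_nhds hu] with v hv using (hasDerivAt ha (le_of_lt hv)).deriv
  have hpos := one_add_mul_exp_sub_one_pos ha hu.le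
  have hquot : HasDerivAt (fun v => a * exp v / (1 + a * (exp v - 1)))
      ((a * exp u * (1 + a * (exp u - 1)) - a * exp u * (a * exp u)) / (1 + a * (exp u - 1)) ^ 2)
      u :=
    ((hasDerivAt_exp u).const_mul a).div (hasDerivAt_one_add_mul_exp_sub_one u) hpos.ne'
  rw [Function.iterate_succ_apply, Function.iterate_one, hderiv.deriv_eq, hquot.deriv]
  field_simp
  ring

lemma strictConvexOn (ha₀ : 0 < a) (ha₁ : a < 1) :
    StrictConvexOn ℝ (Ici 0) (logOneAddMulExpSubOne a) := by
  refine strictConvexOn_of_deriv2_pos (convex_Ici 0)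
    (fun u hu => (hasDerivAt ha₀.le hu).continuousAt.continuousWithinAt) fun u hu => ?_
  rw [interior_Ici] at hu
  rw [iterate_deriv_two ha₀.le hu]
  have : 0 < 1 - a := sub_pos.2 ha₁
  have := one_add_mul_exp_sub_one_pos ha₀.le hu.le
  positivity

lemma strictConcaveOn (ha : 1 < a) :
    StrictConcaveOn ℝ (Ici 0) (logOneAddMulExpSubOne a) := by
  have ha₀ : 0 ≤ a := zero_le_one.trans ha.le
  refine strictConcaveOn_of_deriv2_neg (convex_Ici 0)
    (fun u hu => (hasDerivAt ha₀ hu).continuousAt.continuousWithinAt) fun u hu => ?_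
  rw [interior_Ici] at hu
  rw [iterate_deriv_two ha₀ hu]
  have := one_add_mul_exp_sub_one_pos ha₀ hu.le
  have hnum : a * (1 - a) * exp u < 0 :=
    mul_neg_of_neg_of_pos (mul_neg_of_pos_of_neg (by linarith) (by linarith)) (exp_pos u)
  exact div_neg_of_neg_of_pos hnum (by positivity)

end logOneAddMulExpSubOne

noncomputable def smoothIndicator (a ε : ℝ) : ℝ := log (1 + a / ε) / log (1 + 1 / ε)

lemma strictAntiOn_log_one_add_one_div : StrictAntiOn (fun ε : ℝ => log (1 + 1 / ε)) (Ioi 0) :=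
  fun x (hx : 0 < x) y (hy : 0 < y) hxy => log_lt_log (by positivity) (by gcongr)

lemma mapsTo_log_one_add_one_div : MapsTo (fun ε : ℝ => log (1 + 1 / ε)) (Ioi 0) (Ioi 0) :=
  fun _ hε => log_pos (lt_add_of_pos_right 1 (one_div_pos.2 hε))

lemma eqOn_smoothIndicator (a : ℝ) : EqOn (smoothIndicator a)
    ((fun u => logOneAddMulExpSubOne a u / u) ∘ fun ε => log (1 + 1 / ε)) (Ioi 0) := by
  intro ε (hε : 0 < ε)
  simp only [smoothIndicator, Function.comp_apply]
  rw [logOneAddMulExpSubOne.apply_log_one_add (by positivity), mul_one_div]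

lemma strictMonoOn_smoothIndicator {a : ℝ} (ha : 1 < a) :
    StrictMonoOn (smoothIndicator a) (Ioi 0) :=
  ((logOneAddMulExpSubOne.strictConcaveOn ha).strictAntiOn_div_self
    logOneAddMulExpSubOne.apply_zero |>.comp strictAntiOn_log_one_add_one_div
    mapsTo_log_one_add_one_div).congr (eqOn_smoothIndicator a).symm

lemma strictAntiOn_smoothIndicator {a : ℝ} (ha₀ : 0 < a) (ha₁ : a < 1) :
    StrictAntiOn (smoothIndicator a) (Ioi 0) :=
  ((logOneAddMulExpSubOne.strictConvexOn ha₀ ha₁).strictMonoOn_div_self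
    logOneAddMulExpSubOne.apply_zero |>.comp_strictAntiOn strictAntiOn_log_one_add_one_div
    mapsTo_log_one_add_one_div).congr (eqOn_smoothIndicator a).symm

/-- With a_ε = log(1 + a/ε)/log(1 + 1/ε): for a > 1 the map ε ↦ a_ε is strictly increasing
    on (0,∞); for 0 < a < 1 it is strictly decreasing on (0,∞). -/
theorem stmt_7 (a : ℝ) (ha : 0 < a) :
    (1 < a → ∀ ε₁ ε₂ : ℝ, 0 < ε₂ → ε₂ < ε₁ →
      Real.log (1 + a / ε₂) / Real.log (1 + 1 / ε₂)
        < Real.log (1 + a / ε₁) / Real.log (1 + 1 / ε₁)) ∧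
    (a < 1 → ∀ ε₁ ε₂ : ℝ, 0 < ε₂ → ε₂ < ε₁ →
      Real.log (1 + a / ε₁) / Real.log (1 + 1 / ε₁)
        < Real.log (1 + a / ε₂) / Real.log (1 + 1 / ε₂)) :=
  ⟨fun ha₁ _ _ hε₂ hε => strictMonoOn_smoothIndicator ha₁ hε₂ (hε₂.trans hε) hε,
    fun ha₁ _ _ hε₂ hε => strictAntiOn_smoothIndicator ha ha₁ hε₂ (hε₂.trans hε) hε⟩
end

section
/- Let Ω ⊆ ℝⁿ be a convex set, let u, v : ℝⁿ → ℝ be strictly convex with v differentiable, and set f = u − v. Suppose y ∈ Ω and x' ∈ Ω minimizes the function z ↦ u(z) − zᵀ∇v(y) over Ω. If x' ≠ y, then f(x') < f(y). -/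
/-!
Restricting `v` to the line through `y` and `x'` gives a strictly convex function of one
variable, so its derivative at `y` in the direction `x' - y` is strictly below the secant slope:
`∇v(y)ᵀ(x' - y) < v(x') - v(y)`. Comparing the minimizer `x'` with the competitor `y` gives
`u(x') - u(y) ≤ ∇v(y)ᵀ(x' - y)`, and the two inequalities add up to `f(x') < f(y)`.
-/

open AffineMap

theorem StrictConvexOn.comp_affineMap_of_injective {𝕜 E F β : Type*} [Field 𝕜] [LinearOrder 𝕜]
    [AddCommGroup E] [AddCommGroup F] [AddCommMonoid β] [PartialOrder β]
    [Module 𝕜 E] [Module 𝕜 F] [SMul 𝕜 β] {f : F → β} {s : Set F}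
    (hf : StrictConvexOn 𝕜 s f) (g : E →ᵃ[𝕜] F) (hg : Function.Injective g) :
    StrictConvexOn 𝕜 (g ⁻¹' s) (f ∘ g) :=
  ⟨hf.1.affine_preimage g, fun x hx y hy hxy a b ha hb hab =>
    calc
      (f ∘ g) (a • x + b • y) = f (a • g x + b • g y) := by
        rw [Function.comp_apply, Convex.combo_affine_apply hab]
      _ < a • f (g x) + b • f (g y) := hf.2 hx hy (hg.ne hxy) ha hb hab⟩

theorem StrictConvexOn.lt_sub_of_hasFDerivAt {E : Type*} [NormedAddCommGroup E] [NormedSpace ℝ E]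
    {f : E → ℝ} {f' : E →L[ℝ] ℝ} {s : Set E} {x y : E}
    (hf : StrictConvexOn ℝ s f) (hx : x ∈ s) (hy : y ∈ s) (hxy : x ≠ y)
    (hf' : HasFDerivAt f f' y) :
    f' (x - y) < f x - f y := by
  have hline : StrictConvexOn ℝ (lineMap y x ⁻¹' s) (f ∘ lineMap y x) :=
    hf.comp_affineMap_of_injective _ (lineMap_injective ℝ hxy.symm)
  have hderiv : HasDerivAt (f ∘ lineMap (k := ℝ) y x) (f' (x - y)) 0 := by
    have hf'0 : HasFDerivAt f f' (lineMap y x (0 : ℝ)) := by rwa [lineMap_apply_zero]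
    exact hf'0.comp_hasDerivAt 0 hasDerivAt_lineMap
  simpa [slope] using
    hline.lt_slope_of_hasDerivAt (by simpa using hy) (by simpa using hx) one_pos hderiv

theorem stmt_10_general (n : ℕ) (Ω : Set (Fin n → ℝ))
    (u v : (Fin n → ℝ) → ℝ)
    (hv : StrictConvexOn ℝ Set.univ v)
    (hvd : Differentiable ℝ v)
    (y : Fin n → ℝ) (hy : y ∈ Ω) (x' : Fin n → ℝ)
    (hmin : ∀ z ∈ Ω, u x' - fderiv ℝ v y x' ≤ u z - fderiv ℝ v y z)
    (hne : x' ≠ y) :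
    u x' - v x' < u y - v y := by
  have hsecant : fderiv ℝ v y (x' - y) < v x' - v y :=
    hv.lt_sub_of_hasFDerivAt trivial trivial hne (hvd y).hasFDerivAt
  have hcompare := hmin y hy
  rw [map_sub] at hsecant
  linarith

/-- Strict descent of the linear-majorization (CCCP) step for a d.c. function f = u − v with
    u, v strictly convex and v differentiable: if x' ∈ Ω minimizes z ↦ u(z) − zᵀ∇v(y) over
    the convex set Ω and x' ≠ y ∈ Ω, then f(x') < f(y). -/
theorem stmt_10 (n : ℕ) (Ω : Set (Fin n → ℝ)) (hΩ : Convex ℝ Ω)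
    (u v : (Fin n → ℝ) → ℝ)
    (hu : StrictConvexOn ℝ Set.univ u) (hv : StrictConvexOn ℝ Set.univ v)
    (hvd : Differentiable ℝ v)
    (y : Fin n → ℝ) (hy : y ∈ Ω) (x' : Fin n → ℝ) (hx' : x' ∈ Ω)
    (hmin : ∀ z ∈ Ω, u x' - fderiv ℝ v y x' ≤ u z - fderiv ℝ v y z)
    (hne : x' ≠ y) :
    u x' - v x' < u y - v y :=
  stmt_10_general n Ω u v hv hvd y hy x' hmin hne
end

section
/- Let Ω ⊆ ℝⁿ be a nonempty compact convex set, let u, v : ℝⁿ → ℝ be convex functions with v differentiable. Let {x^{(l)}}_{l≥0} be any sequence with x^{(0)} ∈ Ω and x^{(l+1)} ∈ argmin_{x∈Ω} (u(x) − xᵀ∇v(x^{(l)})) for every l (the argmin is nonempty since convex real-valued functions on ℝⁿ are continuous and Ω is compact). Then the sequence of objective values u(x^{(l)}) − v(x^{(l)}) is nonincreasing and converges to a real limit. -/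
/-! The linearization `u - v(a) - v'(a)(· - a)` majorizes `u - v` by the gradient inequality for
the convex function `v`, and agrees with it at `a`; so minimizing it can only decrease `u - v`.
The objective values therefore form a nonincreasing sequence, bounded below by the minimum of the
continuous function `u - v` on the compact set `Ω`, hence convergent. -/

theorem ConvexOn.add_fderiv_sub_le {E : Type*} [NormedAddCommGroup E] [NormedSpace ℝ E]
    {s : Set E} {v : E → ℝ} {v' : E →L[ℝ] ℝ} {a b : E} (hv : ConvexOn ℝ s v)
    (ha : a ∈ s) (hb : b ∈ s) (hv' : HasFDerivAt v v' a) :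
    v a + v' (b - a) ≤ v b := by
  set γ : ℝ →ᵃ[ℝ] E := AffineMap.lineMap a b
  have hline : ConvexOn ℝ (γ ⁻¹' s) (v ∘ γ) := hv.comp_affineMap γ
  have hderiv : HasDerivAt (v ∘ γ) (v' (b - a)) 0 :=
    hv'.comp_hasDerivAt_of_eq 0 AffineMap.hasDerivAt_lineMap (AffineMap.lineMap_apply_zero a b).symm
  have := hline.le_slope_of_hasDerivAt (by simpa [γ] using ha) (by simpa [γ] using hb) one_pos
    hderiv
  rwa [slope_def_field, Function.comp_apply, Function.comp_apply, AffineMap.lineMap_apply_zero,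
    AffineMap.lineMap_apply_one, sub_zero, div_one, le_sub_iff_add_le'] at this

theorem ConvexOn.sub_le_sub_of_fderiv_le {E : Type*} [NormedAddCommGroup E] [NormedSpace ℝ E]
    {s : Set E} {u v : E → ℝ} {a b : E} (hv : ConvexOn ℝ s v) (ha : a ∈ s) (hb : b ∈ s)
    (hvd : DifferentiableAt ℝ v a)
    (hmin : u b - fderiv ℝ v a b ≤ u a - fderiv ℝ v a a) :
    u b - v b ≤ u a - v a := by
  have := hv.add_fderiv_sub_le ha hb hvd.hasFDerivAt
  rw [map_sub] at this
  linarith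

theorem stmt_11_general (n : ℕ) (Ω : Set (Fin n → ℝ))
    (hcomp : IsCompact Ω)
    (u v : (Fin n → ℝ) → ℝ)
    (hu : ConvexOn ℝ Set.univ u) (hv : ConvexOn ℝ Set.univ v)
    (hvd : Differentiable ℝ v)
    (x : ℕ → Fin n → ℝ) (hx0 : x 0 ∈ Ω)
    (hstep : ∀ l, x (l + 1) ∈ Ω ∧
      ∀ z ∈ Ω, u (x (l + 1)) - fderiv ℝ v (x l) (x (l + 1)) ≤ u z - fderiv ℝ v (x l) z) :
    (∀ l, u (x (l + 1)) - v (x (l + 1)) ≤ u (x l) - v (x l)) ∧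
    ∃ L : ℝ, Filter.Tendsto (fun l => u (x l) - v (x l)) Filter.atTop (nhds L) := by
  have hmem : ∀ l, x l ∈ Ω
    | 0 => hx0
    | l + 1 => (hstep l).1
  have hmono : ∀ l, u (x (l + 1)) - v (x (l + 1)) ≤ u (x l) - v (x l) := fun l =>
    hv.sub_le_sub_of_fderiv_le (Set.mem_univ _) (Set.mem_univ _) (hvd _)
      ((hstep l).2 _ (hmem l))
  have hcont : Continuous fun p => u p - v p :=
    (continuousOn_univ.mp (hu.continuousOn isOpen_univ)).sub hvd.continuous
  have hbdd : BddBelow (Set.range fun l => u (x l) - v (x l)) :=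
    (hcomp.bddBelow_image hcont.continuousOn).mono <| Set.range_subset_iff.mpr fun l =>
      Set.mem_image_of_mem (fun p => u p - v p) (hmem l)
  exact ⟨hmono, _, tendsto_atTop_ciInf (antitone_nat_of_succ_le hmono) hbdd⟩

/-- For the d.c. majorization-minimization iteration on a nonempty compact convex set Ω,
    with u, v convex and v differentiable, the objective values u(x^l) − v(x^l) are
    nonincreasing and converge to a real limit. -/
theorem stmt_11 (n : ℕ) (Ω : Set (Fin n → ℝ)) (hne : Ω.Nonempty)
    (hcomp : IsCompact Ω) (hconv : Convex ℝ Ω)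
    (u v : (Fin n → ℝ) → ℝ)
    (hu : ConvexOn ℝ Set.univ u) (hv : ConvexOn ℝ Set.univ v)
    (hvd : Differentiable ℝ v)
    (x : ℕ → Fin n → ℝ) (hx0 : x 0 ∈ Ω)
    (hstep : ∀ l, x (l + 1) ∈ Ω ∧
      ∀ z ∈ Ω, u (x (l + 1)) - fderiv ℝ v (x l) (x (l + 1)) ≤ u z - fderiv ℝ v (x l) z) :
    (∀ l, u (x (l + 1)) - v (x (l + 1)) ≤ u (x l) - v (x l)) ∧
    ∃ L : ℝ, Filter.Tendsto (fun l => u (x l) - v (x l)) Filter.atTop (nhds L) :=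
  stmt_11_general n Ω hcomp u v hu hv hvd x hx0 hstep
end

section
/- Let c ∈ ℝⁿ, let w ∈ ℝⁿ with wᵢ > 0 for all i, and let ρ ≥ 0. Define tᵢ = max(|cᵢ| − (ρ/2)wᵢ, 0) and S = √(Σᵢ tᵢ²), and assume S > 0. Then the vector x* with x*ᵢ = tᵢ · sign(cᵢ) / S maximizes the function x ↦ Σᵢ (cᵢ xᵢ − (ρ/2) wᵢ |xᵢ|) over the Euclidean unit ball {x ∈ ℝⁿ : ‖x‖₂ ≤ 1}, and the maximum value equals S. -/
/-- Closed-form solution of the sparse PCA subproblem: with tᵢ = [|cᵢ| − (ρ/2)wᵢ]₊ and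
    S = √(Σ tᵢ²) > 0, the vector x*ᵢ = tᵢ sign(cᵢ)/S maximizes
    x ↦ Σᵢ (cᵢxᵢ − (ρ/2)wᵢ|xᵢ|) over the Euclidean unit ball, with maximum value S. -/
theorem stmt_14 (n : ℕ) (c w : Fin n → ℝ) (hw : ∀ i, 0 < w i) (ρ : ℝ) (hρ : 0 ≤ ρ)
    (t : Fin n → ℝ) (ht : ∀ i, t i = max (|c i| - ρ / 2 * w i) 0)
    (S : ℝ) (hS : S = Real.sqrt (∑ i, (t i) ^ 2)) (hSpos : 0 < S) :
    (∑ i, (t i * Real.sign (c i) / S) ^ 2) ≤ 1 ∧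
    (∀ x : Fin n → ℝ, (∑ i, (x i) ^ 2) ≤ 1 →
      ∑ i, (c i * x i - ρ / 2 * w i * |x i|)
        ≤ ∑ i, (c i * (t i * Real.sign (c i) / S)
            - ρ / 2 * w i * |t i * Real.sign (c i) / S|)) ∧
    (∑ i, (c i * (t i * Real.sign (c i) / S)
        - ρ / 2 * w i * |t i * Real.sign (c i) / S|)) = S := by
  have htnn : ∀ i, 0 ≤ t i := fun i => (ht i) ▸ le_max_right _ _
  have hS2 : (∑ i, (t i) ^ 2) = S ^ 2 := by
    rw [hS, Real.sq_sqrt (Finset.sum_nonneg fun i _ => sq_nonneg _)]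
  -- key per-index identity
  have key : ∀ i, c i * (t i * Real.sign (c i)) - ρ / 2 * w i * |t i * Real.sign (c i)| =
      t i ^ 2 := by
    intro i
    have ht2 : t i * (|c i| - ρ / 2 * w i) = t i ^ 2 := by
      rcases le_or_gt (|c i| - ρ / 2 * w i) 0 with h | h
      · have : t i = 0 := by rw [ht i, max_eq_right h]
        simp [this]
      · have : t i = |c i| - ρ / 2 * w i := by rw [ht i, max_eq_left h.le]
        rw [← this]; ring
    rcases lt_trichotomy (c i) 0 with h | h | h
    · rw [Real.sign_of_neg h]
      rw [abs_mul, abs_of_nonneg (htnn i)]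
      rw [abs_of_neg h] at ht2
      simp only [abs_neg, abs_one]
      nlinarith [ht2]
    · have : t i = 0 := by
        rw [ht i, h, abs_zero]
        exact max_eq_right (by nlinarith [hw i])
      simp [this]
    · rw [Real.sign_of_pos h]
      rw [abs_mul, abs_of_nonneg (htnn i)]
      rw [abs_of_pos h] at ht2
      simp only [abs_one]
      nlinarith [ht2]
  have hval : ∀ i, c i * (t i * Real.sign (c i) / S)
      - ρ / 2 * w i * |t i * Real.sign (c i) / S| = t i ^ 2 / S := by
    intro i
    rw [abs_div, abs_of_pos hSpos, ← key i]
    ring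
  have hvalsum : (∑ i, (c i * (t i * Real.sign (c i) / S)
      - ρ / 2 * w i * |t i * Real.sign (c i) / S|)) = S := by
    simp_rw [hval]
    rw [← Finset.sum_div, hS2, sq, mul_div_assoc, div_self hSpos.ne', mul_one]
  refine ⟨?_, ?_, hvalsum⟩
  · have hsgn : ∀ i, (t i * Real.sign (c i) / S) ^ 2 ≤ t i ^ 2 / S ^ 2 := by
      intro i
      have h1 : (Real.sign (c i)) ^ 2 ≤ 1 := by
        rcases Real.sign_apply_eq (c i) with h | h | h <;> rw [h] <;> norm_num
      rw [div_pow]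
      gcongr ?_ / _
      calc (t i * Real.sign (c i)) ^ 2 = t i ^ 2 * (Real.sign (c i)) ^ 2 := by ring
        _ ≤ t i ^ 2 * 1 := by nlinarith [sq_nonneg (t i)]
        _ = t i ^ 2 := mul_one _
    calc (∑ i, (t i * Real.sign (c i) / S) ^ 2) ≤ ∑ i, t i ^ 2 / S ^ 2 :=
          Finset.sum_le_sum fun i _ => hsgn i
      _ = 1 := by rw [← Finset.sum_div, hS2, div_self (by positivity)]
  · intro x hx
    rw [hvalsum]
    have h1 : ∑ i, (c i * x i - ρ / 2 * w i * |x i|) ≤ ∑ i, t i * |x i| := by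
      apply Finset.sum_le_sum
      intro i _
      have hc : c i * x i ≤ |c i| * |x i| := by
        calc c i * x i ≤ |c i * x i| := le_abs_self _
          _ = |c i| * |x i| := abs_mul _ _
      have hti : |c i| - ρ / 2 * w i ≤ t i := (ht i) ▸ le_max_left _ _
      nlinarith [abs_nonneg (x i)]
    have h2 : (∑ i, t i * |x i|) ^ 2 ≤ (∑ i, t i ^ 2) * ∑ i, |x i| ^ 2 :=
      Finset.sum_mul_sq_le_sq_mul_sq Finset.univ t (fun i => |x i|)
    have hx' : (∑ i, |x i| ^ 2) = ∑ i, x i ^ 2 := by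
      simp [sq_abs]
    have h3 : (∑ i, t i * |x i|) ^ 2 ≤ S ^ 2 := by
      rw [hx', hS2] at h2
      nlinarith [sq_nonneg S]
    have h4 : ∑ i, t i * |x i| ≤ S := by
      nlinarith [Finset.sum_nonneg (fun i (_ : i ∈ Finset.univ) =>
        mul_nonneg (htnn i) (abs_nonneg (x i)))]
    linarith
end
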